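/- Let n be a natural number and let m satisfy 3 ≤ m ≤ n. If m < n, then the cycle sum s_m lies in the ℚ-subalgebra of ℚ[S_n] generated by {s_i : 1 ≤ i < m} ∪ {s_{(m−1,2)}}. If m = n, then s_n lies in the ℚ-subalgebra of ℚ[S_n] generated by {s_i : 1 ≤ i < n}. -/

import Mathlib

/-- `classSum n m` is the sum, in the group algebra `ℚ[Sₙ]`, of all permutations
whose cycle type is the multiset `m` (parts of size 1 being suppressed, as in
Mathlib's `Equiv.Perm.cycleType`). -/
noncomputable def classSum (n : ℕ) (m : Multiset ℕ) : MonoidAlgebra ℚ (Equiv.Perm (Fin n)) :=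
  ∑ σ ∈ Finset.univ.filter (fun σ : Equiv.Perm (Fin n) => σ.cycleType = m),
    MonoidAlgebra.single σ (1 : ℚ)

/-- The cycle sum `sᵢ`: the sum of all `i`-cycles in `Sₙ` for `i ≥ 2`, and the
identity of `ℚ[Sₙ]` for `i ≤ 1`. -/
noncomputable def cycleSum (n i : ℕ) : MonoidAlgebra ℚ (Equiv.Perm (Fin n)) :=
  if i < 2 then 1 else classSum n {i}

/-!
Class sums `K_ν` span the class-invariant elements of `ℚ[Sₙ]`, and a product `K_l * K_u` is a
combination, with positive coefficients, of `K_{l+u}` (from disjoint products) and of class sums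
of types moving fewer than `Σ l + Σ u` points. Extracting the top term, induction on the number of
moved points puts every `K_ν` with `Σ ν ≤ m`, `ν ≠ (m)` into the algebra generated by the `s_i`,
`i < m`. Since an `m`-cycle is an `(m-1)`-cycle times a transposition, `s_{m-1} s_2` is a nonzero
multiple of `s_m` plus a multiple of `s_{(m-1,2)}` plus such lower terms; for `m = n` the class
`(m-1,2)` is empty.
-/

open Equiv Equiv.Perm Finset MonoidAlgebra

namespace Equiv.Perm

variable {α : Type*} [DecidableEq α] [Fintype α]

theorem card_support_mul_lt_of_not_disjoint {σ τ : Perm α} (h : ¬ σ.Disjoint τ) :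
    #(σ * τ).support < #σ.support + #τ.support := by
  have hinter : (σ.support ∩ τ.support).Nonempty :=
    not_disjoint_iff_nonempty_inter.mp (mt disjoint_iff_disjoint_support.mpr h)
  calc #(σ * τ).support ≤ #(σ.support ∪ τ.support) := card_le_card (support_mul_le σ τ)
    _ < #(σ.support ∪ τ.support) + #(σ.support ∩ τ.support) := by
        simpa using hinter.card_pos
    _ = #σ.support + #τ.support := card_union_add_card_inter _ _

theorem exists_cycleType_mul_eq_of_mem_cycleType {π : Perm α} {a : ℕ}
    (ha : a ∈ π.cycleType) :
    ∃ c ρ : Perm α, c.cycleType = {a} ∧ ρ.cycleType = π.cycleType.erase a ∧ ρ * c = π := by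
  obtain ⟨c, hc, rfl⟩ := Multiset.mem_map.mp ha
  have hcyc := (mem_cycleFactorsFinset_iff.mp hc).1
  refine ⟨c, π * c⁻¹, hcyc.cycleType, ?_, inv_mul_cancel_right π c⟩
  rw [cycleType_mul_inv_mem_cycleFactorsFinset_eq_sub hc, hcyc.cycleType, Multiset.sub_singleton]
  rfl

theorem IsCycle.apply_apply_ne {π : Perm α} (hπ : π.IsCycle) (h3 : 3 ≤ #π.support) {x : α}
    (hx : π x ≠ x) : π (π x) ≠ x := by
  intro hxx
  have hsq : π ^ 2 = 1 := (hπ.pow_eq_one_iff' hx).mpr (by rwa [sq, mul_apply])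
  have := Nat.le_of_dvd two_pos (orderOf_dvd_of_pow_eq_one hsq)
  rw [hπ.orderOf] at this
  omega

theorem IsCycle.exists_cycleType_mul_swap_eq {π : Perm α} (hπ : π.IsCycle)
    (h3 : 3 ≤ #π.support) :
    ∃ c τ : Perm α, c.cycleType = {#π.support - 1} ∧ τ.cycleType = {2} ∧ c * τ = π := by
  obtain ⟨u, hu⟩ := hπ.nonempty_support
  have hu' : π u ≠ u := mem_support.mp hu
  have hπu : π (π u) ≠ π u := by simpa using hu'
  have hc : π * swap u (π u) = swap (π u) (π (π u)) * π := by
    rw [swap_apply_apply]; group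
  refine ⟨π * swap u (π u), swap u (π u), ?_, ?_, by rw [mul_swap_mul_self]⟩
  · rw [hc, (hπ.swap_mul hπu (hπ.apply_apply_ne h3 hπu)).cycleType,
      support_swap_mul_eq _ _ (hπ.apply_apply_ne h3 hπu),
      card_sdiff_of_subset (singleton_subset_iff.mpr (mem_support.mpr hπu)), card_singleton]
  · rw [(isCycle_swap hu'.symm).cycleType, card_support_swap hu'.symm]

end Equiv.Perm

variable {n : ℕ}

theorem coeff_classSum (ν : Multiset ℕ) (σ : Perm (Fin n)) :
    (classSum n ν).coeff σ = if σ.cycleType = ν then 1 else 0 := by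
  classical
  simp [classSum, coeff_sum, Finsupp.single_apply]

theorem classSum_eq_zero {ν : Multiset ℕ} (h : ∀ σ : Perm (Fin n), σ.cycleType ≠ ν) :
    classSum n ν = 0 :=
  sum_eq_zero fun σ hσ => absurd (mem_filter.mp hσ).2 (h σ)

theorem classSum_zero : classSum n 0 = 1 := by
  rw [classSum, filter_congr fun σ _ => cycleType_eq_zero, filter_eq' univ, if_pos (mem_univ 1),
    sum_singleton, MonoidAlgebra.one_def]

def IsClassInvariant (x : MonoidAlgebra ℚ (Perm (Fin n))) : Prop :=
  ∀ σ τ : Perm (Fin n), σ.cycleType = τ.cycleType → x.coeff σ = x.coeff τ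

theorem isClassInvariant_classSum (ν : Multiset ℕ) : IsClassInvariant (classSum n ν) := by
  intro σ τ h
  rw [coeff_classSum, coeff_classSum, h]

theorem isClassInvariant_iff_commute {x : MonoidAlgebra ℚ (Perm (Fin n))} :
    IsClassInvariant x ↔ ∀ g : Perm (Fin n), Commute (single g 1) x := by
  refine ⟨fun hx g => ?_, fun hx σ τ h => ?_⟩
  · ext h
    rw [coeff_single_mul_apply, coeff_mul_single_apply, one_mul, mul_one]
    exact hx _ _ (by rw [← cycleType_conj (τ := g⁻¹) (σ := h * g⁻¹)]; congr 1; group)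
  · obtain ⟨g, rfl⟩ := isConj_iff.mp (isConj_iff_cycleType_eq.mpr h)
    have := congrArg (coeff · (g * σ)) (hx g)
    simp only [coeff_single_mul_apply, coeff_mul_single_apply, one_mul, mul_one,
      inv_mul_cancel_left] at this
    exact this

theorem IsClassInvariant.mul {x y : MonoidAlgebra ℚ (Perm (Fin n))} (hx : IsClassInvariant x)
    (hy : IsClassInvariant y) : IsClassInvariant (x * y) :=
  isClassInvariant_iff_commute.mpr fun g =>
    (isClassInvariant_iff_commute.mp hx g).mul_right (isClassInvariant_iff_commute.mp hy g)

theorem IsClassInvariant.sub {x y : MonoidAlgebra ℚ (Perm (Fin n))} (hx : IsClassInvariant x)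
    (hy : IsClassInvariant y) : IsClassInvariant (x - y) := fun σ τ h => by
  simp only [coeff_sub, Finsupp.sub_apply, hx σ τ h, hy σ τ h]

theorem IsClassInvariant.smul {x : MonoidAlgebra ℚ (Perm (Fin n))} (c : ℚ)
    (hx : IsClassInvariant x) : IsClassInvariant (c • x) := fun σ τ h => by
  simp only [coeff_smul_apply, hx σ τ h]

theorem mem_of_isClassInvariant {S : Subalgebra ℚ (MonoidAlgebra ℚ (Perm (Fin n)))}
    {x : MonoidAlgebra ℚ (Perm (Fin n))} (hx : IsClassInvariant x)
    (h : ∀ σ, x.coeff σ ≠ 0 → classSum n σ.cycleType ∈ S) : x ∈ S := by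
  classical
  have hx_sum : x = ∑ σ, x.coeff σ • single σ 1 := by
    ext τ; simp [coeff_sum]
  rw [hx_sum, ← sum_fiberwise_of_maps_to (g := cycleType) (t := univ.image cycleType)
    fun σ _ => mem_image_of_mem _ (mem_univ σ)]
  refine S.sum_mem fun ν hν => ?_
  obtain ⟨σ₀, -, rfl⟩ := mem_image.mp hν
  have hfiber : ∑ σ ∈ univ with σ.cycleType = σ₀.cycleType, x.coeff σ • single σ (1 : ℚ) =
      x.coeff σ₀ • classSum n σ₀.cycleType := by
    rw [classSum, smul_sum]
    exact sum_congr rfl fun σ hσ => by rw [hx σ σ₀ (mem_filter.mp hσ).2]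
  rw [hfiber]
  by_cases h₀ : x.coeff σ₀ = 0
  · rw [h₀, zero_smul]; exact S.zero_mem
  · exact S.smul_mem (h σ₀ h₀) _

theorem classSum_mem_of_coeff_ne_zero {S : Subalgebra ℚ (MonoidAlgebra ℚ (Perm (Fin n)))}
    {x : MonoidAlgebra ℚ (Perm (Fin n))} (hxS : x ∈ S) (hx : IsClassInvariant x)
    {π : Perm (Fin n)} (hπ : x.coeff π ≠ 0)
    (h : ∀ σ, x.coeff σ ≠ 0 → σ.cycleType ≠ π.cycleType → classSum n σ.cycleType ∈ S) :
    classSum n π.cycleType ∈ S := by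
  set y := x - x.coeff π • classSum n π.cycleType
  have hy : ∀ σ, y.coeff σ = if σ.cycleType = π.cycleType then 0 else x.coeff σ := by
    intro σ
    simp only [y, coeff_sub, Finsupp.sub_apply, coeff_smul_apply, coeff_classSum, smul_eq_mul]
    split_ifs with hσ
    · rw [hx σ π hσ, mul_one, sub_self]
    · rw [mul_zero, sub_zero]
  have hyS : y ∈ S := by
    refine mem_of_isClassInvariant (hx.sub ((isClassInvariant_classSum _).smul _)) fun σ hσ => ?_
    rw [hy] at hσ
    split_ifs at hσ with hσπ
    · exact absurd rfl hσ
    · exact h σ hσ hσπ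
  have hK : classSum n π.cycleType = (x.coeff π)⁻¹ • (x - y) := by
    rw [sub_sub_cancel, smul_smul, inv_mul_cancel₀ hπ, one_smul]
  rw [hK]
  exact S.smul_mem (S.sub_mem hxS hyS) _

theorem coeff_classSum_mul_classSum_ne_zero_iff {l u : Multiset ℕ} {π : Perm (Fin n)} :
    (classSum n l * classSum n u).coeff π ≠ 0 ↔
      ∃ α β : Perm (Fin n), α.cycleType = l ∧ β.cycleType = u ∧ α * β = π := by
  classical
  simp only [classSum, sum_mul_sum, single_mul_single, one_mul, coeff_sum, coeff_single,
    Finsupp.coe_finsetSum, Finset.sum_apply, Finsupp.single_apply]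
  rw [Ne, sum_eq_zero_iff_of_nonneg fun _ _ => sum_nonneg fun _ _ => by positivity]
  simp

theorem cycleType_of_coeff_classSum_mul_classSum_ne_zero {l u : Multiset ℕ} {σ : Perm (Fin n)}
    (hσ : (classSum n l * classSum n u).coeff σ ≠ 0) :
    σ.cycleType = l + u ∨ σ.cycleType.sum < l.sum + u.sum := by
  obtain ⟨α, β, rfl, rfl, rfl⟩ := coeff_classSum_mul_classSum_ne_zero_iff.mp hσ
  by_cases hαβ : α.Disjoint β
  · exact Or.inl hαβ.cycleType_mul
  · right
    simpa only [sum_cycleType] using card_support_mul_lt_of_not_disjoint hαβ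

def cycleSumsBelow (n m : ℕ) : Set (MonoidAlgebra ℚ (Perm (Fin n))) :=
  {x | ∃ i, 1 ≤ i ∧ i < m ∧ x = cycleSum n i}

theorem classSum_singleton_mem_adjoin_cycleSumsBelow {m a : ℕ} (ha : 2 ≤ a) (ham : a < m) :
    classSum n {a} ∈ Algebra.adjoin ℚ (cycleSumsBelow n m) :=
  Algebra.subset_adjoin ⟨a, by omega, ham, (if_neg (by omega)).symm⟩

theorem classSum_mem_adjoin_cycleSumsBelow {m : ℕ} {ν : Multiset ℕ} (hsum : ν.sum ≤ m)
    (hne : ν ≠ {m}) : classSum n ν ∈ Algebra.adjoin ℚ (cycleSumsBelow n m) := by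
  induction hs : ν.sum using Nat.strong_induction_on generalizing ν with | _ s ih
  set A := Algebra.adjoin ℚ (cycleSumsBelow n m)
  by_cases hex : ∃ π : Perm (Fin n), π.cycleType = ν
  swap
  · rw [classSum_eq_zero (not_exists.mp hex)]; exact A.zero_mem
  obtain ⟨π, rfl⟩ := hex
  rcases Multiset.empty_or_exists_mem π.cycleType with hν | ⟨a, ha⟩
  · rw [hν, classSum_zero]; exact A.one_mem
  have ha2 := two_le_of_mem_cycleType ha
  obtain ⟨c, ρ, hc, hρ, rfl⟩ := exists_cycleType_mul_eq_of_mem_cycleType ha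
  have hsplit : (ρ * c).cycleType = ρ.cycleType + {a} := by
    rw [hρ, add_comm, Multiset.singleton_add, Multiset.cons_erase ha]
  rcases Multiset.empty_or_exists_mem ρ.cycleType with hρ0 | ⟨b, hb⟩
  · rw [hsplit, hρ0, zero_add] at hsum hne ⊢
    simp only [Multiset.sum_singleton] at hsum
    exact classSum_singleton_mem_adjoin_cycleSumsBelow ha2
      (lt_of_le_of_ne hsum (by simpa using hne))
  have hρsum : 2 ≤ ρ.cycleType.sum :=
    (two_le_of_mem_cycleType hb).trans (Multiset.le_sum_of_mem hb)
  have hs' : s = ρ.cycleType.sum + a := by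
    rw [← hs, hsplit, Multiset.sum_add, Multiset.sum_singleton]
  have hxA : classSum n ρ.cycleType * classSum n {a} ∈ A :=
    A.mul_mem
      (ih _ (by omega) (by omega) (by rintro h; rw [h, Multiset.sum_singleton] at hs'; omega) rfl)
      (classSum_singleton_mem_adjoin_cycleSumsBelow ha2 (by omega))
  refine classSum_mem_of_coeff_ne_zero hxA
    ((isClassInvariant_classSum _).mul (isClassInvariant_classSum _))
    (coeff_classSum_mul_classSum_ne_zero_iff.mpr ⟨ρ, c, rfl, hc, rfl⟩) fun σ hσ hσν => ?_
  have hlt : σ.cycleType.sum < ρ.cycleType.sum + a := by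
    simpa using (cycleType_of_coeff_classSum_mul_classSum_ne_zero hσ).resolve_left
      (by rwa [← hsplit])
  exact ih _ (by omega) (by omega) (by rintro h; rw [h, Multiset.sum_singleton] at hlt; omega) rfl

theorem classSum_singleton_mem_adjoin {m : ℕ} (h3 : 3 ≤ m) :
    classSum n {m} ∈ Algebra.adjoin ℚ (cycleSumsBelow n m ∪ {classSum n {m - 1, 2}}) := by
  set A := Algebra.adjoin ℚ (cycleSumsBelow n m ∪ {classSum n {m - 1, 2}})
  have hbelow : Algebra.adjoin ℚ (cycleSumsBelow n m) ≤ A :=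
    Algebra.adjoin_mono Set.subset_union_left
  by_cases hex : ∃ π : Perm (Fin n), π.cycleType = {m}
  swap
  · rw [classSum_eq_zero (not_exists.mp hex)]; exact A.zero_mem
  obtain ⟨π, hπ⟩ := hex
  have hcard : #π.support = m := by rw [← sum_cycleType, hπ, Multiset.sum_singleton]
  obtain ⟨c, τ, hc, hτ, hcτ⟩ :=
    (card_cycleType_eq_one.mp (by rw [hπ]; rfl)).exists_cycleType_mul_swap_eq (hcard ▸ h3)
  have hxA : classSum n {m - 1} * classSum n {2} ∈ A :=
    A.mul_mem (hbelow (classSum_singleton_mem_adjoin_cycleSumsBelow (by omega) (by omega)))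
      (hbelow (classSum_singleton_mem_adjoin_cycleSumsBelow le_rfl (by omega)))
  rw [← hπ]
  refine classSum_mem_of_coeff_ne_zero hxA
    ((isClassInvariant_classSum _).mul (isClassInvariant_classSum _))
    (coeff_classSum_mul_classSum_ne_zero_iff.mpr ⟨c, τ, hcard ▸ hc, hτ, hcτ⟩) fun σ hσ hσπ => ?_
  rcases cycleType_of_coeff_classSum_mul_classSum_ne_zero hσ with hσ₂ | hlt
  · rw [hσ₂]
    exact Algebra.subset_adjoin (Set.mem_union_right _ rfl)
  · simp only [Multiset.sum_singleton] at hlt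
    exact hbelow (classSum_mem_adjoin_cycleSumsBelow (by omega) (hπ ▸ hσπ))

theorem cycleSum_mem_adjoin_general (n m : ℕ) (h3 : 3 ≤ m) :
    (m < n → classSum n {m} ∈ Algebra.adjoin ℚ
        ({x : MonoidAlgebra ℚ (Equiv.Perm (Fin n)) |
            ∃ i, 1 ≤ i ∧ i < m ∧ x = cycleSum n i} ∪
          {classSum n {m - 1, 2}})) ∧
    (m = n → classSum n {n} ∈ Algebra.adjoin ℚ
        {x : MonoidAlgebra ℚ (Equiv.Perm (Fin n)) |
          ∃ i, 1 ≤ i ∧ i < n ∧ x = cycleSum n i}) := by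
  refine ⟨fun _ => classSum_singleton_mem_adjoin h3, ?_⟩
  rintro rfl
  have h0 : classSum m {m - 1, 2} = 0 := classSum_eq_zero fun σ hσ => by
    have := sum_cycleType_le σ
    simp only [hσ, Multiset.insert_eq_cons, Multiset.sum_cons, Multiset.sum_singleton,
      Fintype.card_fin] at this
    omega
  refine Algebra.adjoin_le ?_ (classSum_singleton_mem_adjoin (n := m) h3)
  rintro x (hx | rfl)
  · exact Algebra.subset_adjoin hx
  · rw [h0]; exact Subalgebra.zero_mem _

/-- For `3 ≤ m ≤ n`: if `m < n` then the cycle sum `s_m` lies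
in the ℚ-subalgebra of `ℚ[Sₙ]` generated by `{sᵢ : 1 ≤ i < m}` together with
`s_{(m−1,2)}`; if `m = n` then `s_n` lies in the ℚ-subalgebra generated by
`{sᵢ : 1 ≤ i < n}`. -/
theorem cycleSum_mem_adjoin (n m : ℕ) (h3 : 3 ≤ m) (hmn : m ≤ n) :
    (m < n → classSum n {m} ∈ Algebra.adjoin ℚ
        ({x : MonoidAlgebra ℚ (Equiv.Perm (Fin n)) |
            ∃ i, 1 ≤ i ∧ i < m ∧ x = cycleSum n i} ∪
          {classSum n {m - 1, 2}})) ∧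
    (m = n → classSum n {n} ∈ Algebra.adjoin ℚ
        {x : MonoidAlgebra ℚ (Equiv.Perm (Fin n)) |
          ∃ i, 1 ≤ i ∧ i < n ∧ x = cycleSum n i}) :=
  cycleSum_mem_adjoin_general n m h3
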